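/- arXiv:1905.02721 — 7 statements merged into one kernel-verified Lean document; each statement's English description precedes it below -/
import Mathlib

section
/- Let t ≥ 1 and let n_1, …, n_t be positive integers with n = n_1 + ⋯ + n_t. Let a ≥ 0 and l ≥ 0 be integers with a + l ≤ n. Then the set Ω = {(i, j) : a + 1 ≤ i ≤ a + l, 1 ≤ j ≤ t, ⌈n_j(2a−1)/(2n)⌉ < ⌈n_j(2i−1)/(2n)⌉ < ⌈n_j(2i+1)/(2n)⌉} has cardinality at most l. -/
/-!
For fixed `j` the map `i ↦ ⌈n_j(2i−1)/(2n)⌉` is monotone, so it is injective on the indices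
where it jumps, and it sends the `i` with `(i, j) ∈ Ω` into the open integer interval between
its values at `a` and `a + l + 1`. That interval has fewer than `n_j(l+1)/n` elements, because
the arguments of the two ceilings differ by exactly `n_j(l+1)/n`. Summing over `j` gives
`|Ω| < l + 1`.
-/

open Finset

theorem Finset.card_filter_product_eq_sum {α β : Type*} (s : Finset α) (t : Finset β)
    (p : α × β → Prop) [DecidablePred p] :
    #{x ∈ s ×ˢ t | p x} = ∑ b ∈ t, #{a ∈ s | p (a, b)} := by
  simp only [card_filter, sum_product_right]

section CeilJumps

variable {K : Type*} [Field K] [LinearOrder K] [IsStrictOrderedRing K] [FloorRing K]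

theorem card_Ioo_ceil_lt_sub {x y : K} (h : x < y) : (#(Ioo ⌈x⌉ ⌈y⌉) : K) < y - x := by
  rw [Int.card_Ioo]
  rcases le_or_gt (⌈y⌉ - ⌈x⌉ - 1) 0 with hle | hpos
  · rw [Int.toNat_of_nonpos hle]
    simpa using h
  · have hx := Int.le_ceil x
    have hy := Int.ceil_lt_add_one y
    rw [← Int.cast_natCast, Int.toNat_of_nonneg hpos.le]
    push_cast
    linarith

theorem Monotone.card_filter_jumps_le {α : Type*} [LinearOrder α] [LocallyFiniteOrder α]
    {f : ℕ → α} (hf : Monotone f) (a l : ℕ) :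
    #{i ∈ Icc (a + 1) (a + l) | f a < f i ∧ f i < f (i + 1)} ≤ #(Ioo (f a) (f (a + l + 1))) := by
  have jump_lt : ∀ i i', f i < f (i + 1) → i < i' → f i < f i' := fun i i' hi hii' =>
    hi.trans_le (hf hii')
  refine card_le_card_of_injOn f (fun i hi => ?_) (StrictMonoOn.injOn fun i hi i' _ hii' => ?_)
  · simp only [coe_filter, Set.mem_ofPred_eq, mem_Icc] at hi
    exact mem_Ioo.2 ⟨hi.2.1, jump_lt i _ hi.2.2 (by omega)⟩
  · simp only [coe_filter, Set.mem_ofPred_eq] at hi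
    exact jump_lt i i' hi.2.2 hii'

theorem card_ceil_jumps_lt {c : K} (hc : 0 < c) (a l : ℕ) :
    (#{i ∈ Icc (a + 1) (a + l) | ⌈c * (2 * a - 1)⌉ < ⌈c * (2 * (i : ℕ) - 1)⌉ ∧
        ⌈c * (2 * i - 1)⌉ < ⌈c * (2 * i + 1)⌉} : K) < 2 * c * (l + 1) := by
  set f : ℕ → ℤ := fun i => ⌈c * (2 * i - 1)⌉
  have hf : Monotone f := fun i i' h => Int.ceil_mono <| by gcongr
  have hsucc : ∀ i : ℕ, ⌈c * (2 * i + 1)⌉ = f (i + 1) := fun i => by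
    simp only [f]; push_cast; ring_nf
  simp only [hsucc]
  calc _ ≤ (#(Ioo (f a) (f (a + l + 1))) : K) := Nat.cast_le.2 (hf.card_filter_jumps_le a l)
    _ < c * (2 * ↑(a + l + 1) - 1) - c * (2 * a - 1) := card_Ioo_ceil_lt_sub (by gcongr; simp)
    _ = 2 * c * (l + 1) := by push_cast; ring

end CeilJumps

theorem stmt_0_general (t : ℕ) (ht : 1 ≤ t) (nv : Fin t → ℕ) (hnv : ∀ j, 0 < nv j)
    (n : ℕ) (hn : n = ∑ j, nv j)
    (a l : ℕ) :
    ((Finset.Icc (a + 1) (a + l) ×ˢ (Finset.univ : Finset (Fin t))).filter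
      (fun p =>
        ⌈(nv p.2 : ℚ) * (2 * (a : ℚ) - 1) / (2 * (n : ℚ))⌉ <
          ⌈(nv p.2 : ℚ) * (2 * (p.1 : ℚ) - 1) / (2 * (n : ℚ))⌉ ∧
        ⌈(nv p.2 : ℚ) * (2 * (p.1 : ℚ) - 1) / (2 * (n : ℚ))⌉ <
          ⌈(nv p.2 : ℚ) * (2 * (p.1 : ℚ) + 1) / (2 * (n : ℚ))⌉)).card ≤ l := by
  have hne : (univ : Finset (Fin t)).Nonempty := univ_nonempty_iff.2 ⟨⟨0, ht⟩⟩
  have hn0 : (0 : ℚ) < n := by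
    rw [hn]; exact_mod_cast sum_pos (fun j _ => hnv j) hne
  rw [card_filter_product_eq_sum]
  simp only [mul_div_right_comm _ _ (2 * (n : ℚ))]
  rw [← Nat.lt_succ_iff, ← Nat.cast_lt (α := ℚ)]
  push_cast
  calc _ < ∑ j, 2 * ((nv j : ℚ) / (2 * n)) * (l + 1) :=
        sum_lt_sum_of_nonempty hne fun j _ => card_ceil_jumps_lt (by have := hnv j; positivity) a l
    _ = l + 1 := by
      rw [← sum_mul, ← mul_sum, ← sum_div, ← Nat.cast_sum, ← hn]
      field_simp

/-- Lemma 1 of the paper: the set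
`Ω = {(i,j) : a+1 ≤ i ≤ a+l, 1 ≤ j ≤ t, ⌈n_j(2a-1)/(2n)⌉ < ⌈n_j(2i-1)/(2n)⌉ < ⌈n_j(2i+1)/(2n)⌉}`
has cardinality at most `l`. -/
theorem stmt_0 (t : ℕ) (ht : 1 ≤ t) (nv : Fin t → ℕ) (hnv : ∀ j, 0 < nv j)
    (n : ℕ) (hn : n = ∑ j, nv j)
    (a l : ℕ) (hal : a + l ≤ n) :
    ((Finset.Icc (a + 1) (a + l) ×ˢ (Finset.univ : Finset (Fin t))).filter
      (fun p =>
        ⌈(nv p.2 : ℚ) * (2 * (a : ℚ) - 1) / (2 * (n : ℚ))⌉ <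
          ⌈(nv p.2 : ℚ) * (2 * (p.1 : ℚ) - 1) / (2 * (n : ℚ))⌉ ∧
        ⌈(nv p.2 : ℚ) * (2 * (p.1 : ℚ) - 1) / (2 * (n : ℚ))⌉ <
          ⌈(nv p.2 : ℚ) * (2 * (p.1 : ℚ) + 1) / (2 * (n : ℚ))⌉)).card ≤ l :=
  stmt_0_general t ht nv hnv n hn a l
end

section
/- Let t ≥ 1 and let n_1, …, n_t be positive integers with n = n_1 + ⋯ + n_t. Let a ≥ 0 and l ≥ 0 be integers with a + l ≤ n, and fix j with 1 ≤ j ≤ t. Then the set Ω_j = {i : a + 1 ≤ i ≤ a + l, ⌈n_j(2a−1)/(2n)⌉ < ⌈n_j(2i−1)/(2n)⌉ < ⌈n_j(2i+1)/(2n)⌉} has cardinality at most ⌈n_j(l+1)/n⌉ − 1. -/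
/-!
Write `g i = ⌈n_j (2i - 1) / (2n)⌉`, a monotone integer sequence. Every `i ∈ Ω_j` is a jump
`g i < g (i + 1)` lying strictly above the level `g a`, so `i ↦ g (i + 1)` maps `Ω_j` injectively into
`(g a + 1, g (a + l + 1)]`. Finally `⌈x⌉ - ⌈y⌉ ≤ ⌈x - y⌉` bounds `g (a + l + 1) - g a` by `⌈n_j (l + 1) / n⌉`.
-/

open Finset

theorem Int.ceil_sub_ceil_le {K : Type*} [Field K] [LinearOrder K] [IsStrictOrderedRing K]
    [FloorRing K] (x y : K) : ⌈x⌉ - ⌈y⌉ ≤ ⌈x - y⌉ := by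
  have := Int.ceil_add_le (x - y) y
  rw [sub_add_cancel] at this
  omega

theorem card_le_toNat_of_jumps {g : ℕ → ℤ} (hg : Monotone g) {s : Finset ℕ} {a b : ℕ}
    (hs : ∀ i ∈ s, i ≤ b ∧ g a < g i ∧ g i < g (i + 1)) :
    #s ≤ (g (b + 1) - g a - 1).toNat := by
  have hmono : StrictMonoOn (fun i => g (i + 1)) s := by
    intro i hi i' hi' hlt
    show g (i + 1) < g (i' + 1)
    have := hg (show i + 1 ≤ i' from hlt)
    have := (hs i' hi').2.2
    omega
  have hmaps : ∀ i ∈ s, g (i + 1) ∈ Ioc (g a + 1) (g (b + 1)) := by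
    intro i hi
    obtain ⟨hib, hai, hjump⟩ := hs i hi
    have := hg (show i + 1 ≤ b + 1 by omega)
    rw [mem_Ioc]
    omega
  calc #s ≤ #(Ioc (g a + 1) (g (b + 1))) := card_le_card_of_injOn _ hmaps hmono.injOn
    _ = (g (b + 1) - g a - 1).toNat := by rw [Int.card_Ioc, sub_add_eq_sub_sub]

theorem monotone_ceil_mul_two_mul_sub_one_div {K : Type*} [Field K] [LinearOrder K]
    [IsStrictOrderedRing K] [FloorRing K] {p q : K} (hp : 0 ≤ p) (hq : 0 ≤ q) :
    Monotone fun i : ℕ => ⌈p * (2 * (i : K) - 1) / (2 * q)⌉ := by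
  intro i i' h
  apply Int.ceil_le_ceil
  have : (i : K) ≤ i' := by exact_mod_cast h
  gcongr

theorem stmt_1_general (t : ℕ) (nv : Fin t → ℕ) (hnv : ∀ j, 0 < nv j)
    (n : ℕ) (hn : n = ∑ j, nv j)
    (a l : ℕ) (j : Fin t) :
    (((Finset.Icc (a + 1) (a + l)).filter
      (fun (i : ℕ) =>
        ⌈(nv j : ℚ) * (2 * (a : ℚ) - 1) / (2 * (n : ℚ))⌉ <
          ⌈(nv j : ℚ) * (2 * (i : ℚ) - 1) / (2 * (n : ℚ))⌉ ∧
        ⌈(nv j : ℚ) * (2 * (i : ℚ) - 1) / (2 * (n : ℚ))⌉ <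
          ⌈(nv j : ℚ) * (2 * (i : ℚ) + 1) / (2 * (n : ℚ))⌉)).card : ℤ) ≤
      ⌈(nv j : ℚ) * ((l : ℚ) + 1) / (n : ℚ)⌉ - 1 := by
  set g : ℕ → ℤ := fun i => ⌈(nv j : ℚ) * (2 * (i : ℚ) - 1) / (2 * (n : ℚ))⌉
  have hg : Monotone g := monotone_ceil_mul_two_mul_sub_one_div (by positivity) (by positivity)
  have hshift (i : ℕ) : ⌈(nv j : ℚ) * (2 * (i : ℚ) + 1) / (2 * (n : ℚ))⌉ = g (i + 1) := by
    simp only [g]; push_cast; ring_nf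
  have hcard : #((Icc (a + 1) (a + l)).filter fun i =>
      g a < g i ∧ g i < ⌈(nv j : ℚ) * (2 * (i : ℚ) + 1) / (2 * (n : ℚ))⌉) ≤
      (g (a + l + 1) - g a - 1).toNat := by
    refine card_le_toNat_of_jumps hg fun i hi => ?_
    rw [mem_filter, mem_Icc, hshift] at hi
    exact ⟨hi.1.2, hi.2⟩
  have hgap : g (a + l + 1) - g a ≤ ⌈(nv j : ℚ) * ((l : ℚ) + 1) / (n : ℚ)⌉ := by
    refine (Int.ceil_sub_ceil_le _ _).trans (le_of_eq (congrArg _ ?_))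
    push_cast
    ring
  have hpos : 0 < ⌈(nv j : ℚ) * ((l : ℚ) + 1) / (n : ℚ)⌉ := by
    have hj := hnv j
    have hn0 : 0 < n := hn ▸ sum_pos (fun k _ => hnv k) ⟨j, mem_univ j⟩
    exact Int.ceil_pos.mpr (by positivity)
  calc _ ≤ ((g (a + l + 1) - g a - 1).toNat : ℤ) := Nat.cast_le.mpr hcard
    _ ≤ _ := by omega

/-- Per-coordinate bound from the proof of Lemma 1: the set
`Ω_j = {i : a+1 ≤ i ≤ a+l, ⌈n_j(2a-1)/(2n)⌉ < ⌈n_j(2i-1)/(2n)⌉ < ⌈n_j(2i+1)/(2n)⌉}`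
has cardinality at most `⌈n_j(l+1)/n⌉ - 1`. -/
theorem stmt_1 (t : ℕ) (ht : 1 ≤ t) (nv : Fin t → ℕ) (hnv : ∀ j, 0 < nv j)
    (n : ℕ) (hn : n = ∑ j, nv j)
    (a l : ℕ) (hal : a + l ≤ n) (j : Fin t) :
    (((Finset.Icc (a + 1) (a + l)).filter
      (fun (i : ℕ) =>
        ⌈(nv j : ℚ) * (2 * (a : ℚ) - 1) / (2 * (n : ℚ))⌉ <
          ⌈(nv j : ℚ) * (2 * (i : ℚ) - 1) / (2 * (n : ℚ))⌉ ∧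
        ⌈(nv j : ℚ) * (2 * (i : ℚ) - 1) / (2 * (n : ℚ))⌉ <
          ⌈(nv j : ℚ) * (2 * (i : ℚ) + 1) / (2 * (n : ℚ))⌉)).card : ℤ) ≤
      ⌈(nv j : ℚ) * ((l : ℚ) + 1) / (n : ℚ)⌉ - 1 :=
  stmt_1_general t nv hnv n hn a l j
end

section
/- Let t ≥ 1 and let n_1, …, n_t be positive integers with n = n_1 + ⋯ + n_t. Let a ≥ 0 and l ≥ 0 be integers with a + l ≤ n, and fix j with 1 ≤ j ≤ t. If ⌈n_j(2(a+l)+1)/(2n)⌉ > ⌈n_j(2a−1)/(2n)⌉, then the set Ω_j = {i : a + 1 ≤ i ≤ a + l, ⌈n_j(2a−1)/(2n)⌉ < ⌈n_j(2i−1)/(2n)⌉ < ⌈n_j(2i+1)/(2n)⌉} has cardinality exactly ⌈n_j(2(a+l)+1)/(2n)⌉ − ⌈n_j(2a−1)/(2n)⌉ − 1. -/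
/-!
Since `n_j ≤ n`, the map `i ↦ ⌈n_j (2i - 1) / (2n)⌉` is nondecreasing with increments `0` or `1`.
An index `i` lies in `Ω_j` exactly when the value jumps between `i` and `i + 1` from a value
already above the starting one, so `Ω_j` has one element for each value strictly between the
values at `a` and `a + l + 1`.
-/

open Finset

-- With `toNat` the count holds also before the first jump, so the induction needs no cases.
theorem card_filter_Icc_jumps_eq_toNat (g : ℕ → ℤ) (hg : Monotone g)
    (hstep : ∀ i, g (i + 1) ≤ g i + 1) (a l : ℕ) :
    ((Icc (a + 1) (a + l)).filter (fun i => g a < g i ∧ g i < g (i + 1))).card =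
      (g (a + l + 1) - g a - 1).toNat := by
  induction l with
  | zero =>
    have := hstep a
    simp only [add_zero, Icc_eq_empty_of_lt (Nat.lt_succ_self a), filter_empty, card_empty]
    omega
  | succ l ih =>
    rw [← add_assoc, ← insert_Icc_right_eq_Icc_add_one (by omega), filter_insert,
      apply_ite card, card_insert_of_notMem (by simp), ih]
    have := hg (show a ≤ a + l + 1 by omega)
    have := hg (show a + l + 1 ≤ a + l + 1 + 1 by omega)
    have := hstep (a + l + 1)
    split_ifs <;> omega

section CeilOfArithmeticProgression

variable {α : Type*} [Ring α] [LinearOrder α] [IsOrderedRing α] [FloorRing α]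
  {f : ℕ → α} {d : α}

theorem monotone_ceil_of_add_nonneg (hf : ∀ i, f (i + 1) = f i + d) (hd : 0 ≤ d) :
    Monotone fun i => ⌈f i⌉ :=
  Int.ceil_mono.comp <| monotone_nat_of_le_succ fun i => by rw [hf]; exact le_add_of_nonneg_right hd

theorem ceil_succ_le_of_add_le_one (hf : ∀ i, f (i + 1) = f i + d) (hd : d ≤ 1) (i : ℕ) :
    ⌈f (i + 1)⌉ ≤ ⌈f i⌉ + 1 := by
  rw [hf, ← Int.ceil_add_one]
  exact Int.ceil_mono (add_le_add_right hd _)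

end CeilOfArithmeticProgression

theorem stmt_2_general (t : ℕ) (nv : Fin t → ℕ)
    (n : ℕ) (hn : n = ∑ j, nv j)
    (a l : ℕ) (j : Fin t)
    (hne : ⌈(nv j : ℚ) * (2 * ((a : ℚ) + (l : ℚ)) + 1) / (2 * (n : ℚ))⌉ >
      ⌈(nv j : ℚ) * (2 * (a : ℚ) - 1) / (2 * (n : ℚ))⌉) :
    (((Finset.Icc (a + 1) (a + l)).filter
      (fun (i : ℕ) =>
        ⌈(nv j : ℚ) * (2 * (a : ℚ) - 1) / (2 * (n : ℚ))⌉ <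
          ⌈(nv j : ℚ) * (2 * (i : ℚ) - 1) / (2 * (n : ℚ))⌉ ∧
        ⌈(nv j : ℚ) * (2 * (i : ℚ) - 1) / (2 * (n : ℚ))⌉ <
          ⌈(nv j : ℚ) * (2 * (i : ℚ) + 1) / (2 * (n : ℚ))⌉)).card : ℤ) =
      ⌈(nv j : ℚ) * (2 * ((a : ℚ) + (l : ℚ)) + 1) / (2 * (n : ℚ))⌉ -
        ⌈(nv j : ℚ) * (2 * (a : ℚ) - 1) / (2 * (n : ℚ))⌉ - 1 := by
  set f : ℕ → ℚ := fun i => (nv j : ℚ) * (2 * (i : ℚ) - 1) / (2 * (n : ℚ)) with hf_def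
  have hf : ∀ i, f (i + 1) = f i + nv j / n := fun i => by
    simp only [hf_def]; push_cast; ring
  have hd : (nv j : ℚ) / n ≤ 1 := by
    refine div_le_one_of_le₀ ?_ (by positivity)
    exact_mod_cast hn ▸ single_le_sum (by simp) (mem_univ j)
  have hshift : ∀ x : ℚ,
      (nv j : ℚ) * (2 * x + 1) / (2 * n) = (nv j : ℚ) * (2 * (x + 1) - 1) / (2 * n) :=
    fun x => by ring
  have hend : (a : ℚ) + l + 1 = ((a + l + 1 : ℕ) : ℚ) := by push_cast; ring
  simp only [hshift, hend, ← Nat.cast_add_one] at hne ⊢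
  change ⌈f (a + l + 1)⌉ > ⌈f a⌉ at hne
  rw [card_filter_Icc_jumps_eq_toNat (fun i => ⌈f i⌉)
    (monotone_ceil_of_add_nonneg hf (by positivity)) (ceil_succ_le_of_add_le_one hf hd),
    Int.toNat_of_nonneg (by omega)]

/-- Counting identity for the nondegenerate case in the proof of Lemma 1: if
`⌈n_j(2(a+l)+1)/(2n)⌉ > ⌈n_j(2a-1)/(2n)⌉`, then `Ω_j` has cardinality exactly
`⌈n_j(2(a+l)+1)/(2n)⌉ - ⌈n_j(2a-1)/(2n)⌉ - 1`. -/
theorem stmt_2 (t : ℕ) (ht : 1 ≤ t) (nv : Fin t → ℕ) (hnv : ∀ j, 0 < nv j)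
    (n : ℕ) (hn : n = ∑ j, nv j)
    (a l : ℕ) (hal : a + l ≤ n) (j : Fin t)
    (hne : ⌈(nv j : ℚ) * (2 * ((a : ℚ) + (l : ℚ)) + 1) / (2 * (n : ℚ))⌉ >
      ⌈(nv j : ℚ) * (2 * (a : ℚ) - 1) / (2 * (n : ℚ))⌉) :
    (((Finset.Icc (a + 1) (a + l)).filter
      (fun (i : ℕ) =>
        ⌈(nv j : ℚ) * (2 * (a : ℚ) - 1) / (2 * (n : ℚ))⌉ <
          ⌈(nv j : ℚ) * (2 * (i : ℚ) - 1) / (2 * (n : ℚ))⌉ ∧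
        ⌈(nv j : ℚ) * (2 * (i : ℚ) - 1) / (2 * (n : ℚ))⌉ <
          ⌈(nv j : ℚ) * (2 * (i : ℚ) + 1) / (2 * (n : ℚ))⌉)).card : ℤ) =
      ⌈(nv j : ℚ) * (2 * ((a : ℚ) + (l : ℚ)) + 1) / (2 * (n : ℚ))⌉ -
        ⌈(nv j : ℚ) * (2 * (a : ℚ) - 1) / (2 * (n : ℚ))⌉ - 1 :=
  stmt_2_general t nv n hn a l j hne
end

section
/- Let n and m be positive integers with m ≤ n. Then the image of the set {1, 2, …, n} under the map i ↦ ⌈m(2i−1)/(2n)⌉ is exactly the set {1, 2, …, m}. -/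
/-- For positive integers `m ≤ n`, the image of `{1,…,n}` under
`i ↦ ⌈m(2i-1)/(2n)⌉` is exactly `{1,…,m}`. -/
theorem stmt_8 (n m : ℕ) (hn : 0 < n) (hm : 0 < m) (hmn : m ≤ n) :
    (Finset.Icc 1 n).image
      (fun (i : ℕ) => ⌈(m : ℚ) * (2 * (i : ℚ) - 1) / (2 * (n : ℚ))⌉) =
      Finset.Icc (1 : ℤ) (m : ℤ) := by
  have h2n : (0:ℚ) < 2 * n := by positivity
  ext k
  simp only [Finset.mem_image, Finset.mem_Icc]
  constructor
  · rintro ⟨i, ⟨hi1, hi2⟩, rfl⟩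
    have hi1' : (1:ℚ) ≤ i := by exact_mod_cast hi1
    have hi2' : (i:ℚ) ≤ n := by exact_mod_cast hi2
    have hm' : (0:ℚ) < m := by exact_mod_cast hm
    constructor
    · have : (0:ℚ) < (m:ℚ) * (2 * (i:ℚ) - 1) / (2 * n) := by
        apply div_pos _ h2n
        nlinarith
      exact Int.ceil_pos.mpr this
    · apply Int.ceil_le.mpr
      rw [div_le_iff₀ h2n]
      push_cast
      nlinarith
  · rintro ⟨hk1, hk2⟩
    set kn := k.toNat with hkn
    have hkcast : (kn:ℤ) = k := Int.toNat_of_nonneg (by omega)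
    have hkn1 : 1 ≤ kn := by omega
    have hkn2 : kn ≤ m := by omega
    set a := 2 * n * kn / m with ha
    have hdm : m * a + 2 * n * kn % m = 2 * n * kn := by
      rw [ha]; exact Nat.div_add_mod (2 * n * kn) m
    have hmod : 2 * n * kn % m < m := Nat.mod_lt _ hm
    have ha1 : m * a ≤ 2 * n * kn := by
      have := Nat.zero_le (2 * n * kn % m)
      linarith
    have ha2 : 2 * n * kn < m * a + m := by linarith
    have ha_ge : 2 ≤ a := by nlinarith
    set b := if a % 2 = 1 then a else a - 1 with hb
    have hb_odd : b % 2 = 1 := by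
      rcases Nat.even_or_odd a with h | h
      · have h' : a % 2 = 0 := Nat.even_iff.mp h
        simp [hb, h']; omega
      · have h' : a % 2 = 1 := Nat.odd_iff.mp h
        simp [hb, h']
    have hb_le : b ≤ a := by rw [hb]; split <;> omega
    have hb_ge : a - 1 ≤ b := by rw [hb]; split <;> omega
    have hub : m * b ≤ 2 * n * kn := le_trans (Nat.mul_le_mul_left m hb_le) ha1
    have hlb : 2 * n * kn < m * b + 2 * n := by
      have h1 : m * (a - 1) ≤ m * b := Nat.mul_le_mul_left m hb_ge
      have h2 : m * a = m * (a - 1) + m := by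
        have h3 : a - 1 + 1 = a := by omega
        calc m * a = m * ((a - 1) + 1) := by rw [h3]
        _ = m * (a - 1) + m := by ring
      linarith
    have hb_pos : 1 ≤ b := by
      by_contra h
      push_neg at h
      interval_cases b <;> nlinarith
    have hb_ub : b ≤ 2 * n - 1 := by
      have hbn : m * b ≤ 2 * n * m := by
        calc m * b ≤ 2 * n * kn := hub
        _ ≤ 2 * n * m := Nat.mul_le_mul_left _ hkn2
      have hb2n : b ≤ 2 * n := by
        by_contra h; push_neg at h; nlinarith
      omega
    refine ⟨(b + 1) / 2, ⟨by omega, by omega⟩, ?_⟩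
    set i := (b + 1) / 2 with hi
    have h2i : 2 * i = b + 1 := by omega
    have hbq : 2 * ((i:ℕ):ℚ) - 1 = (b:ℚ) := by
      have h' : ((2 * i : ℕ) : ℚ) = ((b + 1 : ℕ) : ℚ) := by exact_mod_cast h2i
      push_cast at h'
      linarith
    have hkq : ((kn:ℕ):ℚ) = ((k:ℤ):ℚ) := by exact_mod_cast hkcast
    have hubq : (m:ℚ) * b ≤ 2 * n * ((k:ℤ):ℚ) := by
      have h' : ((m * b : ℕ) : ℚ) ≤ ((2 * n * kn : ℕ) : ℚ) := by exact_mod_cast hub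
      push_cast at h'
      rw [hkq] at h'
      linarith
    have hlbq : 2 * (n:ℚ) * ((k:ℤ):ℚ) < (m:ℚ) * b + 2 * n := by
      have h' : ((2 * n * kn : ℕ) : ℚ) < ((m * b + 2 * n : ℕ) : ℚ) := by exact_mod_cast hlb
      push_cast at h'
      rw [hkq] at h'
      linarith
    rw [Int.ceil_eq_iff]
    constructor
    · rw [hbq, lt_div_iff₀ h2n]
      push_cast
      linarith
    · rw [hbq, div_le_iff₀ h2n]
      push_cast
      linarith
end

section
/- Let t ≥ 1 and let n_1, …, n_t be positive integers with n = n_1 + ⋯ + n_t. Then there exists a partition of {1, 2, …, n} into pairwise disjoint sets G_1, …, G_t with |G_j| = n_j for each j, such that for every j ∈ {1, …, t} the map c ↦ ⌈n_j(2c−1)/(2n)⌉ restricted to G_j is a bijection from G_j onto {1, 2, …, n_j}; equivalently, for every j and every k ∈ {1, …, n_j}, exactly one element c of G_j satisfies (2c−1)/(2n) ∈ ((k−1)/n_j , k/n_j]. -/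
/-- Counting integers `k` in a window given by the bin-containment constraints. -/
lemma slhd_slice_count (n m a b : ℕ) (hm : 1 ≤ m) (hab : a ≤ b) (K : Finset ℕ)
    (hK1 : ∀ k ∈ K, 1 ≤ k)
    (hK : ∀ k ∈ K, 2*a*m ≤ 2*n*(k-1) + 3*m ∧ 2*n*k < 2*b*m + m) :
    (n : ℤ) * K.card + 1 ≤ (m : ℤ) * ((b : ℤ) - (a : ℤ) + 2) := by
  have hm' : (1 : ℤ) ≤ (m : ℤ) := by exact_mod_cast hm
  have hab' : (a : ℤ) ≤ (b : ℤ) := by exact_mod_cast hab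
  rcases K.eq_empty_or_nonempty with rfl | hne
  · simp only [Finset.card_empty, Nat.cast_zero, mul_zero, zero_add]
    nlinarith
  · set kmin := K.min' hne with hkmin
    set kmax := K.max' hne with hkmax
    have hsub : K ⊆ Finset.Icc kmin kmax := by
      intro k hk
      exact Finset.mem_Icc.mpr ⟨K.min'_le k hk, K.le_max' k hk⟩
    have hle : kmin ≤ kmax := K.min'_le _ (K.max'_mem hne)
    have hcard : (K.card : ℤ) ≤ (kmax : ℤ) + 1 - (kmin : ℤ) := by
      have := Finset.card_le_card hsub
      rw [Nat.card_Icc] at this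
      have : (K.card : ℤ) ≤ ((kmax + 1 - kmin : ℕ) : ℤ) := by exact_mod_cast this
      rwa [Nat.cast_sub (by omega)] at this
    have h1 := hK kmin (K.min'_mem hne)
    have h2 := hK kmax (K.max'_mem hne)
    have hk1 : 1 ≤ kmin := hK1 kmin (K.min'_mem hne)
    have e1 : 2*a*m ≤ 2*n*(kmin-1) + 3*m := h1.1
    have e2 : 2*n*kmax < 2*b*m + m := h2.2
    have e1' : 2*(a:ℤ)*m ≤ 2*n*((kmin:ℤ)-1) + 3*m := by
      zify [hk1] at e1
      linarith
    have e2' : 2*(n:ℤ)*kmax < 2*b*m + m := by exact_mod_cast e2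
    have hn0 : (0:ℤ) ≤ (n:ℤ) := by positivity
    have key : 2 * ((n:ℤ) * K.card + 1) < 2 * ((m:ℤ) * ((b:ℤ) - a + 2) + 1) := by
      nlinarith [mul_le_mul_of_nonneg_left hcard hn0]
    have := lt_of_mul_lt_mul_left key (by norm_num : (0:ℤ) ≤ 2)
    linarith [Int.lt_iff_add_one_le.mp this]

/-- Abstract Hall condition for interval systems, via decomposition into maximal runs. -/
lemma slhd_interval_hall {ι : Type} [DecidableEq ι] (lo hi : ι → ℕ)
    (key : ∀ a b : ℕ, a ≤ b → ∀ T : Finset ι, (∀ i ∈ T, a ≤ lo i ∧ hi i ≤ b) →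
      T.card ≤ b - a + 1) :
    ∀ N : ℕ, ∀ U : Finset ℕ, U.card ≤ N → ∀ S : Finset ι,
      (∀ i ∈ S, lo i ≤ hi i) → (∀ i ∈ S, Finset.Icc (lo i) (hi i) ⊆ U) →
      S.card ≤ U.card := by
  intro N
  induction N with
  | zero =>
    intro U hU S hlh hsub
    rcases S.eq_empty_or_nonempty with rfl | ⟨i, hi'⟩
    · simp
    · exfalso
      have : lo i ∈ U := hsub i hi' (Finset.mem_Icc.mpr ⟨le_refl _, hlh i hi'⟩)
      have := Finset.card_pos.mpr ⟨_, this⟩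
      omega
  | succ N ih =>
    intro U hU S hlh hsub
    rcases S.eq_empty_or_nonempty with rfl | ⟨i0, hi0⟩
    · simp
    · have hUne : U.Nonempty :=
        ⟨lo i0, hsub i0 hi0 (Finset.mem_Icc.mpr ⟨le_refl _, hlh i0 hi0⟩)⟩
      set B := U.max' hUne with hB
      have hAset : ((Finset.Icc 0 B).filter (fun a => Finset.Icc a B ⊆ U)).Nonempty := by
        refine ⟨B, Finset.mem_filter.mpr ⟨Finset.mem_Icc.mpr ⟨Nat.zero_le _, le_refl _⟩, ?_⟩⟩
        intro x hx
        rw [Finset.mem_Icc] at hx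
        have : x = B := le_antisymm hx.2 hx.1
        subst this
        exact U.max'_mem hUne
      set A := ((Finset.Icc 0 B).filter (fun a => Finset.Icc a B ⊆ U)).min' hAset with hA
      have hAmem := Finset.mem_filter.mp
        (((Finset.Icc 0 B).filter (fun a => Finset.Icc a B ⊆ U)).min'_mem hAset)
      have hAB : A ≤ B := (Finset.mem_Icc.mp hAmem.1).2
      have hrun : Finset.Icc A B ⊆ U := hAmem.2
      have hmin : ∀ a, Finset.Icc a B ⊆ U → A ≤ a := by
        intro a ha
        by_cases hle : a ≤ B
        · exact Finset.min'_le _ a (Finset.mem_filter.mpr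
            ⟨Finset.mem_Icc.mpr ⟨Nat.zero_le _, hle⟩, ha⟩)
        · omega
      set S1 := S.filter (fun i => A ≤ lo i ∧ hi i ≤ B) with hS1
      set S2 := S.filter (fun i => ¬ (A ≤ lo i ∧ hi i ≤ B)) with hS2
      have hsplit : S1.card + S2.card = S.card := Finset.card_filter_add_card_filter_not _
      -- bound S1
      have hb1 : S1.card ≤ B - A + 1 := by
        refine key A B hAB S1 ?_
        intro i hi'
        exact (Finset.mem_filter.mp hi').2
      -- S2 intervals avoid the run
      have hS2sub : ∀ i ∈ S2, Finset.Icc (lo i) (hi i) ⊆ U \ Finset.Icc A B := by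
        intro i hi'
        have hiS : i ∈ S := (Finset.mem_filter.mp hi').1
        have hnot := (Finset.mem_filter.mp hi').2
        have hhiU : hi i ∈ U := hsub i hiS (Finset.mem_Icc.mpr ⟨hlh i hiS, le_refl _⟩)
        have hhiB : hi i ≤ B := U.le_max' _ hhiU
        have hloA : lo i < A := by
          by_contra h
          exact hnot ⟨by omega, hhiB⟩
        have hhiA : hi i < A := by
          by_contra h
          push_neg at h
          have : Finset.Icc (lo i) B ⊆ U := by
            intro x hx
            rw [Finset.mem_Icc] at hx
            by_cases hxh : x ≤ hi i
            · exact hsub i hiS (Finset.mem_Icc.mpr ⟨hx.1, hxh⟩)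
            · exact hrun (Finset.mem_Icc.mpr ⟨by omega, hx.2⟩)
          have := hmin _ this
          omega
        intro x hx
        rw [Finset.mem_Icc] at hx
        rw [Finset.mem_sdiff]
        refine ⟨hsub i hiS (Finset.mem_Icc.mpr hx), ?_⟩
        rw [Finset.mem_Icc]
        omega
      have hBU : B ∈ U := U.max'_mem hUne
      have hcard' : (U \ Finset.Icc A B).card ≤ N := by
        have h1 : (U \ Finset.Icc A B).card + (Finset.Icc A B).card = U.card :=
          Finset.card_sdiff_add_card_eq_card hrun
        have h2 : 0 < (Finset.Icc A B).card := Finset.card_pos.mpr ⟨B, Finset.mem_Icc.mpr ⟨hAB, le_refl _⟩⟩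
        omega
      have hb2 : S2.card ≤ (U \ Finset.Icc A B).card := by
        refine ih (U \ Finset.Icc A B) hcard' S2 ?_ hS2sub
        intro i hi'
        exact hlh i (Finset.mem_filter.mp hi').1
      have h1 : (U \ Finset.Icc A B).card + (Finset.Icc A B).card = U.card :=
        Finset.card_sdiff_add_card_eq_card hrun
      have h2 : (Finset.Icc A B).card = B - A + 1 := by
        rw [Nat.card_Icc]; omega
      omega


/-- Smallest cell of bin `kk+1` (0-based `kk`) of a slice with `m` runs out of `n`. -/
def slhdCmin (n m kk : ℕ) : ℕ := (2*kk*n + m) / (2*m) + 1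

/-- Largest cell of bin `kk+1` of a slice with `m` runs out of `n`. -/
def slhdCmax (n m kk : ℕ) : ℕ := (2*(kk+1)*n + m) / (2*m)

lemma slhd_mem_iff (n m kk c : ℕ) (hm : 0 < m) :
    (slhdCmin n m kk ≤ c ∧ c ≤ slhdCmax n m kk) ↔
      (2*kk*n + m < c * (2*m) ∧ c * (2*m) ≤ 2*(kk+1)*n + m) := by
  have h2m : 0 < 2*m := by omega
  unfold slhdCmin slhdCmax
  rw [Nat.add_one_le_iff, Nat.div_lt_iff_lt_mul h2m, Nat.le_div_iff_mul_le h2m]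

lemma slhd_cmin_le_cmax (n m kk : ℕ) (hm : 0 < m) (hmn : m ≤ n) :
    slhdCmin n m kk ≤ slhdCmax n m kk := by
  have h2m : 0 < 2*m := by omega
  unfold slhdCmin slhdCmax
  have h1 : (2*kk*n + m + 2*m) / (2*m) = (2*kk*n + m)/(2*m) + 1 := by
    rw [Nat.add_div_right _ h2m]
  have h2 : 2*kk*n + m + 2*m ≤ 2*(kk+1)*n + m := by nlinarith
  calc (2*kk*n + m)/(2*m) + 1 = (2*kk*n + m + 2*m) / (2*m) := h1.symm
    _ ≤ (2*(kk+1)*n + m)/(2*m) := Nat.div_le_div_right h2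

lemma slhd_cmin_pos (n m kk : ℕ) : 1 ≤ slhdCmin n m kk :=
  Nat.succ_le_succ (Nat.zero_le _)

lemma slhd_cmax_le (n m kk : ℕ) (hm : 0 < m) (hkk : kk < m) (hmn : m ≤ n) :
    slhdCmax n m kk ≤ n := by
  have h2m : 0 < 2*m := by omega
  unfold slhdCmax
  rw [Nat.div_le_iff_le_mul_add_pred h2m]
  have h1 : 2*(kk+1)*n ≤ 2*m*n := by
    have hk : kk + 1 ≤ m := hkk
    nlinarith
  have h2 : m ≤ 2*m - 1 := by omega
  linarith

/-- The key per-interval counting bound: at most `b - a + 1` bins have their cell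
range inside `[a, b]`. -/
lemma slhd_key (t : ℕ) (ht : 1 ≤ t) (nv : Fin t → ℕ) (hnv : ∀ j, 0 < nv j)
    (n : ℕ) (hn : n = ∑ j, nv j)
    (a b : ℕ) (ha : 1 ≤ a) (hab : a ≤ b) (T : Finset (Σ j : Fin t, Fin (nv j)))
    (hT : ∀ i ∈ T, a ≤ slhdCmin n (nv i.1) i.2 ∧ slhdCmax n (nv i.1) i.2 ≤ b) :
    T.card ≤ b - a + 1 := by
  classical
  have hn0 : 0 < n := by
    rw [hn]
    have : (0:ℕ) < ∑ j : Fin t, 1 := by simp; omega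
    exact lt_of_lt_of_le this (Finset.sum_le_sum fun j _ => hnv j)
  set P : ∀ j : Fin t, Fin (nv j) → Prop :=
    fun j kk => a ≤ slhdCmin n (nv j) kk ∧ slhdCmax n (nv j) kk ≤ b with hP
  have hTsub : T ⊆ Finset.univ.sigma
      (fun j => (Finset.univ : Finset (Fin (nv j))).filter (P j)) := by
    intro i hiT
    rw [Finset.mem_sigma]
    exact ⟨Finset.mem_univ _, Finset.mem_filter.mpr ⟨Finset.mem_univ _, hT i hiT⟩⟩
  have hTcard : T.card ≤ ∑ j, ((Finset.univ : Finset (Fin (nv j))).filter (P j)).card := by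
    calc T.card ≤ _ := Finset.card_le_card hTsub
      _ = _ := Finset.card_sigma _ _
  -- per-slice bound
  have hslice : ∀ j : Fin t,
      (n : ℤ) * ((Finset.univ : Finset (Fin (nv j))).filter (P j)).card + 1 ≤
        (nv j : ℤ) * ((b : ℤ) - (a : ℤ) + 2) := by
    intro j
    set K : Finset ℕ :=
      ((Finset.univ : Finset (Fin (nv j))).filter (P j)).image
        (fun kk : Fin (nv j) => kk.val + 1) with hK
    have hKcard : K.card = ((Finset.univ : Finset (Fin (nv j))).filter (P j)).card := by
      apply Finset.card_image_of_injective
      intro x y hxy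
      have hxy' : x.val + 1 = y.val + 1 := hxy
      exact Fin.val_injective (by omega)
    rw [← hKcard]
    apply slhd_slice_count n (nv j) a b (hnv j) hab K
    · intro k hk
      rw [hK, Finset.mem_image] at hk
      obtain ⟨kk, _, rfl⟩ := hk
      exact Nat.succ_le_succ (Nat.zero_le _)
    · intro k hk
      rw [hK, Finset.mem_image] at hk
      obtain ⟨kk, hkk, rfl⟩ := hk
      have hp := (Finset.mem_filter.mp hkk).2
      have hcmin := hp.1
      have hcmax := hp.2
      have h2m : 0 < 2 * nv j := by have := hnv j; omega
      obtain ⟨x, rfl⟩ : ∃ x, a = x + 1 := ⟨a - 1, by omega⟩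
      constructor
      · -- 2*(x+1)*(nv j) ≤ 2*n*((kk+1)-1) + 3*(nv j)
        have h0 : x ≤ (2*(kk:ℕ)*n + nv j) / (2*(nv j)) := by
          unfold slhdCmin at hcmin; omega
        have h3 := (Nat.le_div_iff_mul_le h2m).mp h0
        have hsimp : (kk:ℕ) + 1 - 1 = (kk:ℕ) := by omega
        rw [hsimp]
        nlinarith
      · -- 2*n*(kk+1) < 2*b*(nv j) + nv j
        have h0 : (2*((kk:ℕ)+1)*n + nv j) / (2*(nv j)) < b + 1 := by
          unfold slhdCmax at hcmax; omega
        have h3 := (Nat.div_lt_iff_lt_mul h2m).mp h0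
        nlinarith
  have hsum := Finset.sum_le_sum (fun j (_ : j ∈ Finset.univ) => hslice j)
  rw [Finset.sum_add_distrib, ← Finset.mul_sum, Finset.sum_const, ← Finset.sum_mul] at hsum
  have hcast : (∑ j : Fin t, (nv j : ℤ)) = (n : ℤ) := by
    rw [hn]; push_cast; ring
  rw [hcast] at hsum
  simp only [Finset.card_univ, Fintype.card_fin, nsmul_eq_mul, smul_eq_mul, mul_one] at hsum
  have hfin : (n:ℤ) * T.card + 1 ≤ (n:ℤ) * ((b:ℤ) - a + 2) := by
    have h1 : (n:ℤ) * T.card ≤ (n:ℤ) * ∑ j, ((Finset.univ : Finset (Fin (nv j))).filter (P j)).card := by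
      apply mul_le_mul_of_nonneg_left _ (by positivity)
      push_cast
      exact_mod_cast hTcard
    have ht' : (1:ℤ) ≤ t := by exact_mod_cast ht
    push_cast at h1 ⊢
    linarith
  have hlt : (T.card : ℤ) < (b:ℤ) - a + 2 := by
    have hn0' : (0:ℤ) < n := by exact_mod_cast hn0
    nlinarith
  omega

lemma slhd_rat_iff (n m kk c : ℕ) (hm : 0 < m) (hn0 : 0 < n) :
    ((kk : ℚ) / (m : ℚ) < (2*(c:ℚ) - 1) / (2*(n:ℚ)) ∧
      (2*(c:ℚ) - 1) / (2*(n:ℚ)) ≤ ((kk:ℚ) + 1) / (m : ℚ))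
    ↔ (slhdCmin n m kk ≤ c ∧ c ≤ slhdCmax n m kk) := by
  have hmq : (0:ℚ) < m := by exact_mod_cast hm
  have h2n : (0:ℚ) < 2*n := by positivity
  rw [div_lt_div_iff₀ hmq h2n, div_le_div_iff₀ h2n hmq, slhd_mem_iff n m kk c hm]
  constructor
  · rintro ⟨h1, h2⟩
    constructor
    · have : ((2*kk*n + m : ℕ) : ℚ) < ((c*(2*m) : ℕ) : ℚ) := by push_cast; nlinarith
      exact_mod_cast this
    · have : ((c*(2*m) : ℕ) : ℚ) ≤ ((2*(kk+1)*n + m : ℕ) : ℚ) := by push_cast; nlinarith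
      exact_mod_cast this
  · rintro ⟨h1, h2⟩
    have h1' : ((2*kk*n + m : ℕ) : ℚ) < ((c*(2*m) : ℕ) : ℚ) := by exact_mod_cast h1
    have h2' : ((c*(2*m) : ℕ) : ℚ) ≤ ((2*(kk+1)*n + m : ℕ) : ℚ) := by exact_mod_cast h2
    push_cast at h1' h2'
    constructor <;> nlinarith

lemma slhd_ceil_eq (n m kk c : ℕ) (hm : 0 < m) (hn0 : 0 < n)
    (h : slhdCmin n m kk ≤ c ∧ c ≤ slhdCmax n m kk) :
    ⌈(m:ℚ) * (2*(c:ℚ) - 1) / (2*(n:ℚ))⌉ = (kk:ℤ) + 1 := by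
  have hmq : (0:ℚ) < m := by exact_mod_cast hm
  have h2n : (0:ℚ) < 2*n := by positivity
  rw [slhd_mem_iff n m kk c hm] at h
  obtain ⟨h1, h2⟩ := h
  have h1' : ((2*kk*n + m : ℕ) : ℚ) < ((c*(2*m) : ℕ) : ℚ) := by exact_mod_cast h1
  have h2' : ((c*(2*m) : ℕ) : ℚ) ≤ ((2*(kk+1)*n + m : ℕ) : ℚ) := by exact_mod_cast h2
  push_cast at h1' h2'
  rw [Int.ceil_eq_iff]
  constructor
  · push_cast
    rw [lt_div_iff₀ h2n]
    nlinarith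
  · push_cast
    rw [div_le_iff₀ h2n]
    nlinarith

/-- Combinatorial content of Theorem 1: `{1,…,n}` can be partitioned into sets
`G_1, …, G_t` with `|G_j| = n_j` such that on each `G_j` the map
`c ↦ ⌈n_j(2c-1)/(2n)⌉` is a bijection onto `{1,…,n_j}`; equivalently, for every `j`
and every `k ∈ {1,…,n_j}`, exactly one `c ∈ G_j` has `(2c-1)/(2n) ∈ ((k-1)/n_j, k/n_j]`. -/
theorem stmt_9 (t : ℕ) (ht : 1 ≤ t) (nv : Fin t → ℕ) (hnv : ∀ j, 0 < nv j)
    (n : ℕ) (hn : n = ∑ j, nv j) :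
    ∃ G : Fin t → Finset ℕ,
      (∀ j₁ j₂ : Fin t, j₁ ≠ j₂ → Disjoint (G j₁) (G j₂)) ∧
      (Finset.univ.biUnion G = Finset.Icc 1 n) ∧
      (∀ j, (G j).card = nv j) ∧
      (∀ j, Set.BijOn
        (fun (c : ℕ) => ⌈(nv j : ℚ) * (2 * (c : ℚ) - 1) / (2 * (n : ℚ))⌉)
        (G j : Set ℕ) (Set.Icc (1 : ℤ) (nv j : ℤ))) ∧
      (∀ j, ∀ k ∈ Finset.Icc 1 (nv j),
        ((G j).filter (fun (c : ℕ) =>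
          ((k : ℚ) - 1) / (nv j : ℚ) < (2 * (c : ℚ) - 1) / (2 * (n : ℚ)) ∧
          (2 * (c : ℚ) - 1) / (2 * (n : ℚ)) ≤ (k : ℚ) / (nv j : ℚ))).card = 1) := by
  classical
  have hn0 : 0 < n := by
    have h1 : ∑ j : Fin t, 1 ≤ ∑ j : Fin t, nv j :=
      Finset.sum_le_sum (fun j _ => hnv j)
    simp only [Finset.sum_const, Finset.card_univ, Fintype.card_fin, smul_eq_mul, mul_one] at h1
    omega
  have hjn : ∀ j, nv j ≤ n := by
    intro j; rw [hn]
    exact Finset.single_le_sum (fun i _ => Nat.zero_le _) (Finset.mem_univ j)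
  set bins : (Σ j : Fin t, Fin (nv j)) → Finset ℕ := fun i =>
    Finset.Icc (slhdCmin n (nv i.1) i.2) (slhdCmax n (nv i.1) i.2) with hbins
  have hlohi : ∀ i : (Σ j : Fin t, Fin (nv j)),
      slhdCmin n (nv i.1) i.2 ≤ slhdCmax n (nv i.1) i.2 :=
    fun i => slhd_cmin_le_cmax n (nv i.1) i.2 (hnv i.1) (hjn i.1)
  have hbin_sub : ∀ i, bins i ⊆ Finset.Icc 1 n := by
    intro i c hc
    rw [hbins, Finset.mem_Icc] at hc
    rw [Finset.mem_Icc]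
    exact ⟨le_trans (slhd_cmin_pos n (nv i.1) i.2) hc.1,
           le_trans hc.2 (slhd_cmax_le n (nv i.1) i.2 (hnv i.1) i.2.isLt (hjn i.1))⟩
  have hall : ∀ S : Finset (Σ j : Fin t, Fin (nv j)), S.card ≤ (S.biUnion bins).card := by
    intro S
    refine slhd_interval_hall (fun i => slhdCmin n (nv i.1) i.2)
      (fun i => slhdCmax n (nv i.1) i.2)
      ?_ (S.biUnion bins).card _ le_rfl S (fun i _ => hlohi i) ?_
    · intro a b hab T hTc
      by_cases ha : 1 ≤ a
      · exact slhd_key t ht nv hnv n hn a b ha hab T hTc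
      · have ha0 : a = 0 := by omega
        subst ha0
        by_cases hb : 1 ≤ b
        · have h := slhd_key t ht nv hnv n hn 1 b le_rfl hb T
            (fun i hi => ⟨slhd_cmin_pos _ _ _, (hTc i hi).2⟩)
          omega
        · have hb0 : b = 0 := by omega
          subst hb0
          have hTe : T = ∅ := by
            rw [Finset.eq_empty_iff_forall_notMem]
            intro i hi
            have h1 : slhdCmax n (nv i.1) i.2 ≤ 0 := (hTc i hi).2
            have h2 := slhd_cmin_pos n (nv i.1) i.2
            have h3 := hlohi i
            omega
          simp [hTe]
    · intro i hiS c hc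
      exact Finset.mem_biUnion.mpr ⟨i, hiS, hc⟩
  obtain ⟨f, hfinj, hfmem⟩ := (Finset.all_card_le_biUnion_card_iff_exists_injective bins).mp hall
  have hfmem' : ∀ i : (Σ j : Fin t, Fin (nv j)),
      slhdCmin n (nv i.1) i.2 ≤ f i ∧ f i ≤ slhdCmax n (nv i.1) i.2 := by
    intro i
    have := hfmem i
    rw [hbins, Finset.mem_Icc] at this
    exact this
  have hfIcc : ∀ i, f i ∈ Finset.Icc 1 n := fun i => hbin_sub i (hfmem i)
  have hcard_sigma : Fintype.card (Σ j : Fin t, Fin (nv j)) = n := by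
    simp [Fintype.card_sigma, hn]
  have himg : (Finset.univ.image f) = Finset.Icc 1 n := by
    apply Finset.eq_of_subset_of_card_le
    · intro x hx
      obtain ⟨i, _, rfl⟩ := Finset.mem_image.mp hx
      exact hfIcc i
    · rw [Finset.card_image_of_injective _ hfinj, Finset.card_univ, hcard_sigma, Nat.card_Icc]
      omega
  have hinj2 : ∀ j : Fin t, Function.Injective (fun kk : Fin (nv j) => f ⟨j, kk⟩) := by
    intro j a b hab
    have h := hfinj hab
    rw [Sigma.mk.inj_iff] at h
    exact eq_of_heq h.2
  -- ceiling values
  have hceil : ∀ (j : Fin t) (kk : Fin (nv j)),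
      ⌈(nv j : ℚ) * (2 * (f ⟨j, kk⟩ : ℚ) - 1) / (2 * (n : ℚ))⌉ = (kk : ℤ) + 1 :=
    fun j kk => slhd_ceil_eq n (nv j) kk (f ⟨j, kk⟩) (hnv j) hn0 (hfmem' ⟨j, kk⟩)
  refine ⟨fun j => (Finset.univ : Finset (Fin (nv j))).image (fun kk => f ⟨j, kk⟩),
    ?_, ?_, ?_, ?_, ?_⟩
  · -- disjoint
    intro j₁ j₂ hne
    rw [Finset.disjoint_left]
    intro x hx1 hx2
    obtain ⟨k1, _, h1⟩ := Finset.mem_image.mp hx1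
    obtain ⟨k2, _, h2⟩ := Finset.mem_image.mp hx2
    have heq := hfinj (h1.trans h2.symm)
    exact hne (congrArg Sigma.fst heq)
  · -- union
    ext x
    rw [Finset.mem_biUnion, ← himg, Finset.mem_image]
    constructor
    · rintro ⟨j, _, hx⟩
      obtain ⟨kk, _, rfl⟩ := Finset.mem_image.mp hx
      exact ⟨⟨j, kk⟩, Finset.mem_univ _, rfl⟩
    · rintro ⟨⟨j, kk⟩, _, rfl⟩
      exact ⟨j, Finset.mem_univ _,
        Finset.mem_image.mpr ⟨kk, Finset.mem_univ _, rfl⟩⟩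
  · -- cards
    intro j
    rw [Finset.card_image_of_injective _ (hinj2 j), Finset.card_univ, Fintype.card_fin]
  · -- BijOn
    intro j
    refine ⟨?_, ?_, ?_⟩
    · intro c hc
      rw [Finset.coe_image] at hc
      obtain ⟨kk, _, rfl⟩ := hc
      simp only [Set.mem_Icc, hceil]
      have := kk.isLt
      omega
    · intro c1 h1 c2 h2 heq
      rw [Finset.coe_image] at h1 h2
      obtain ⟨kk1, _, rfl⟩ := h1
      obtain ⟨kk2, _, rfl⟩ := h2
      simp only [hceil] at heq
      have : kk1 = kk2 := Fin.val_injective (by omega)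
      rw [this]
    · intro z hz
      obtain ⟨hz1, hz2⟩ := hz
      have hnvj : 0 < nv j := hnv j
      have hzn : z.toNat - 1 < nv j := by omega
      refine ⟨f ⟨j, ⟨z.toNat - 1, hzn⟩⟩, ?_, ?_⟩
      · rw [Finset.coe_image]
        exact ⟨⟨z.toNat - 1, hzn⟩, Finset.mem_coe.mpr (Finset.mem_univ _), rfl⟩
      · simp only [hceil, Fin.val_mk]
        omega
  · -- filter card
    intro j k hk
    rw [Finset.mem_Icc] at hk
    have hkidx : k - 1 < nv j := by omega
    set kidx : Fin (nv j) := ⟨k - 1, hkidx⟩ with hkidxdef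
    rw [Finset.card_eq_one]
    refine ⟨f ⟨j, kidx⟩, ?_⟩
    have hcast1 : ((k : ℚ) - 1) = ((k - 1 : ℕ) : ℚ) := by
      have : (1:ℕ) ≤ k := hk.1
      push_cast [this]
      ring
    have hcast2 : (k : ℚ) = ((k - 1 : ℕ) : ℚ) + 1 := by
      have : (1:ℕ) ≤ k := hk.1
      push_cast [this]
      ring
    ext x
    rw [Finset.mem_filter, Finset.mem_singleton]
    constructor
    · rintro ⟨hxG, hcond⟩
      obtain ⟨kk, _, rfl⟩ := Finset.mem_image.mp hxG
      rw [hcast1, hcast2] at hcond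
      have hmem2 := (slhd_rat_iff n (nv j) (k-1) (f ⟨j, kk⟩) (hnv j) hn0).mp hcond
      have e1 := hceil j kk
      have e2 := slhd_ceil_eq n (nv j) (k-1) (f ⟨j, kk⟩) (hnv j) hn0 hmem2
      rw [e1] at e2
      have hv : (kk : ℕ) = k - 1 := by omega
      have hkkeq : kk = kidx := Fin.ext hv
      rw [hkkeq]
    · rintro rfl
      refine ⟨Finset.mem_image.mpr ⟨kidx, Finset.mem_univ _, rfl⟩, ?_⟩
      rw [hcast1, hcast2]
      have := (slhd_rat_iff n (nv j) (k-1) (f ⟨j, kidx⟩) (hnv j) hn0).mpr (hfmem' ⟨j, kidx⟩)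
      exact this
end

section
/- Let t ≥ 1 and let n_1, …, n_t be positive integers with n = n_1 + ⋯ + n_t. Then there exists a permutation π of {1, 2, …, n} such that, writing H_u = (2π(u) − 1)/(2n) for u = 1, …, n, the following holds: for every i ∈ {1, …, t} and every k ∈ {1, …, n_i}, exactly one index u with Σ_{m=1}^{i−1} n_m < u ≤ Σ_{m=1}^{i} n_m satisfies H_u ∈ ((k−1)/n_i , k/n_i]. Moreover, (H_1, …, H_n) is a permutation of (1/(2n), 3/(2n), …, (2n−1)/(2n)), so each bin ((v−1)/n, v/n], v = 1, …, n, contains exactly one entry of H. -/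
namespace Stmt10

/-- partial sums of block sizes -/
def off (nvf : ℕ → ℕ) (s : ℕ) : ℕ := ∑ j ∈ Finset.range s, nvf j

/-- block index of position u -/
def blk (nvf : ℕ → ℕ) (t u : ℕ) : ℕ := Nat.findGreatest (fun i => off nvf i ≤ u) (t - 1)

lemma off_mono (nvf : ℕ → ℕ) {s s' : ℕ} (h : s ≤ s') : off nvf s ≤ off nvf s' :=
  Finset.sum_le_sum_of_subset (Finset.range_subset_range.2 h)

lemma off_succ (nvf : ℕ → ℕ) (s : ℕ) : off nvf (s + 1) = off nvf s + nvf s :=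
  Finset.sum_range_succ _ _

lemma blk_le (nvf : ℕ → ℕ) (t u : ℕ) : blk nvf t u ≤ t - 1 := Nat.findGreatest_le _

lemma blk_lt (nvf : ℕ → ℕ) {t : ℕ} (ht : 0 < t) (u : ℕ) : blk nvf t u < t :=
  lt_of_le_of_lt (blk_le nvf t u) (by omega)

lemma off_blk_le (nvf : ℕ → ℕ) (t u : ℕ) : off nvf (blk nvf t u) ≤ u := by
  have h0 : off nvf 0 ≤ u := by simp [off]
  exact Nat.findGreatest_spec (P := fun i => off nvf i ≤ u) (Nat.zero_le _) h0

lemma lt_off_blk_add (nvf : ℕ → ℕ) {t u n : ℕ} (ht : 0 < t) (hsum : off nvf t = n)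
    (hu : u < n) : u < off nvf (blk nvf t u) + nvf (blk nvf t u) := by
  by_contra h
  push_neg at h
  have h' : off nvf (blk nvf t u + 1) ≤ u := by rw [off_succ]; exact h
  rcases lt_or_eq_of_le (Nat.succ_le_of_lt (blk_lt nvf ht u)) with hlt | heq
  · exact Nat.findGreatest_is_greatest (P := fun i => off nvf i ≤ u)
      (Nat.lt_succ_self _) (show blk nvf t u + 1 ≤ t - 1 by omega) h'
  · have h'' : off nvf t ≤ u := by rw [← heq]; exact h'
    omega

lemma blk_unique (nvf : ℕ → ℕ) {t u n i : ℕ} (ht : 0 < t) (hsum : off nvf t = n)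
    (hu : u < n) (hi : i < t) (h1 : off nvf i ≤ u) (h2 : u < off nvf i + nvf i) :
    blk nvf t u = i := by
  rcases lt_trichotomy (blk nvf t u) i with h | h | h
  · have hmono : off nvf (blk nvf t u + 1) ≤ off nvf i := off_mono nvf (by omega)
    rw [off_succ] at hmono
    have := lt_off_blk_add nvf ht hsum hu
    omega
  · exact h
  · have hmono : off nvf (i + 1) ≤ off nvf (blk nvf t u) := off_mono nvf (by omega)
    rw [off_succ] at hmono
    have := off_blk_le nvf t u
    omega

/-- the bin condition in integer form -/
def cond (m n J v : ℕ) : Prop := 2 * J * n < (2 * v + 1) * m ∧ (2 * v + 1) * m ≤ 2 * (J + 1) * n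

lemma cond_interval {m n J v1 v2 g : ℕ} (h1 : cond m n J v1) (h2 : cond m n J v2)
    (hg1 : v1 ≤ g) (hg2 : g ≤ v2) : cond m n J g := by
  obtain ⟨l1, u1⟩ := h1
  obtain ⟨l2, u2⟩ := h2
  constructor
  · calc 2 * J * n < (2 * v1 + 1) * m := l1
      _ ≤ (2 * g + 1) * m := Nat.mul_le_mul_right m (by omega)
  · calc (2 * g + 1) * m ≤ (2 * v2 + 1) * m := Nat.mul_le_mul_right m (by omega)
      _ ≤ 2 * (J + 1) * n := u2

lemma cond_disjoint {m n J J' v : ℕ} (hn : 0 < n) (h : cond m n J v) (h' : cond m n J' v) :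
    J = J' := by
  obtain ⟨l1, u1⟩ := h
  obtain ⟨l2, u2⟩ := h'
  by_contra hne
  rcases Nat.lt_or_ge J J' with hlt | hge
  · have : 2 * (J + 1) * n ≤ 2 * J' * n := Nat.mul_le_mul_right n (by omega)
    omega
  · have hlt : J' < J := by omega
    have : 2 * (J' + 1) * n ≤ 2 * J * n := Nat.mul_le_mul_right n (by omega)
    omega

/-- smallest member of a bin, with a div bound -/
lemma exists_vstar {m n J : ℕ} (hm : 0 < m) (hmn : m ≤ n) (hJ : J < m) :
    ∃ v, v < n ∧ cond m n J v ∧ 2 * m * v ≤ 2 * J * n + m := by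
  have h2m : 0 < 2 * m := by omega
  set v := (2 * J * n + m) / (2 * m) with hv
  have hd := Nat.div_add_mod (2 * J * n + m) (2 * m)
  have hr := Nat.mod_lt (2 * J * n + m) h2m
  rw [← hv] at hd
  clear_value v
  set r := (2 * J * n + m) % (2 * m) with hrd
  clear_value r
  have low : 2 * J * n < (2 * v + 1) * m := by nlinarith [hd, hr]
  have high : (2 * v + 1) * m ≤ 2 * (J + 1) * n := by nlinarith [hd]
  have hvn : v < n := by
    have h1 : 2 * (J + 1) * n ≤ 2 * m * n := Nat.mul_le_mul_right n (by omega)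
    have h2 : (2 * v + 1) * m ≤ (2 * n) * m := by nlinarith
    have h3 := Nat.le_of_mul_le_mul_right h2 hm
    omega
  exact ⟨v, hvn, ⟨low, high⟩, by nlinarith [hd]⟩

/-- largest member of a bin, with a div bound -/
lemma exists_vstar2 {m n J : ℕ} (hm : 0 < m) (hmn : m ≤ n) (hJ : J < m) :
    ∃ v, v < n ∧ cond m n J v ∧ 2 * (J + 1) * n + 1 ≤ 2 * m * v + 3 * m := by
  have h2m : 0 < 2 * m := by omega
  have hEm : m ≤ 2 * (J + 1) * n := by nlinarith
  set E := 2 * (J + 1) * n - m with hE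
  have hE2 : E + m = 2 * (J + 1) * n := by omega
  set v := E / (2 * m) with hv
  have hd := Nat.div_add_mod E (2 * m)
  have hr := Nat.mod_lt E h2m
  rw [← hv] at hd
  clear_value v
  set r := E % (2 * m) with hrd
  clear_value r
  clear_value E
  have low : 2 * J * n < (2 * v + 1) * m := by nlinarith [hd, hr, hE2]
  have high : (2 * v + 1) * m ≤ 2 * (J + 1) * n := by nlinarith [hd, hE2]
  have hvn : v < n := by
    have h1 : 2 * (J + 1) * n ≤ 2 * m * n := Nat.mul_le_mul_right n (by omega)
    have h2 : (2 * v + 1) * m ≤ (2 * n) * m := by nlinarith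
    have h3 := Nat.le_of_mul_le_mul_right h2 hm
    omega
  exact ⟨v, hvn, ⟨low, high⟩, by nlinarith [hd, hr, hE2]⟩

lemma block_count {m n J1 J2 a b : ℕ} (hm : 0 < m) (hmn : m ≤ n) (hJ2 : J2 < m) (hle : J1 ≤ J2)
    (H : ∀ v, v < n → cond m n J1 v ∨ cond m n J2 v → a ≤ v ∧ v ≤ b) :
    (J2 + 1 - J1) * n < (b + 2 - a) * m := by
  obtain ⟨v1, hv1n, hc1, hd1⟩ := exists_vstar hm hmn (show J1 < m by omega)
  obtain ⟨v2, hv2n, hc2, hd2⟩ := exists_vstar2 hm hmn hJ2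
  obtain ⟨ha1, hb1⟩ := H v1 hv1n (Or.inl hc1)
  obtain ⟨ha2, hb2⟩ := H v2 hv2n (Or.inr hc2)
  have p1 : m * a ≤ m * v1 := Nat.mul_le_mul_left m ha1
  have p2 : m * v2 ≤ m * b := Nat.mul_le_mul_left m hb2
  have hJ : J1 ≤ J2 + 1 := by omega
  have hab : a ≤ b + 2 := by omega
  zify [hJ, hab]
  have hd1' : (2 : ℤ) * m * v1 ≤ 2 * J1 * n + m := by exact_mod_cast hd1
  have hd2' : (2 : ℤ) * (J2 + 1) * n + 1 ≤ 2 * m * v2 + 3 * m := by exact_mod_cast hd2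
  have p1' : (m : ℤ) * a ≤ m * v1 := by exact_mod_cast p1
  have p2' : (m : ℤ) * v2 ≤ m * b := by exact_mod_cast p2
  nlinarith [hd1', hd2', p1', p2']


instance (m n J v : ℕ) : Decidable (cond m n J v) :=
  inferInstanceAs (Decidable (_ ∧ _))

/-- the set of admissible values for position u -/
def Rset (nvf : ℕ → ℕ) (t n : ℕ) (u : Fin n) : Finset (Fin n) :=
  Finset.univ.filter (fun v =>
    cond (nvf (blk nvf t (u : ℕ))) n ((u : ℕ) - off nvf (blk nvf t (u : ℕ))) (v : ℕ))

lemma mem_Rset {nvf : ℕ → ℕ} {t n : ℕ} {u v : Fin n} :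
    v ∈ Rset nvf t n u ↔
      cond (nvf (blk nvf t (u : ℕ))) n ((u : ℕ) - off nvf (blk nvf t (u : ℕ))) (v : ℕ) := by
  simp [Rset]

section Main

variable {nvf : ℕ → ℕ} {t n : ℕ} (ht : 0 < t) (hpos : ∀ j < t, 0 < nvf j)
  (hsum : off nvf t = n)

include ht hpos hsum

omit ht hpos in
lemma nvf_le_n {i : ℕ} (hi : i < t) : nvf i ≤ n := by
  rw [← hsum]
  exact Finset.single_le_sum (f := nvf) (fun j _ => Nat.zero_le _) (Finset.mem_range.2 hi)

lemma Rset_nonempty (u : Fin n) : (Rset nvf t n u).Nonempty := by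
  have hit : blk nvf t (u : ℕ) < t := blk_lt nvf ht _
  have hm : 0 < nvf (blk nvf t (u : ℕ)) := hpos _ hit
  have hmn : nvf (blk nvf t (u : ℕ)) ≤ n := nvf_le_n hsum hit
  have h1 := off_blk_le nvf t (u : ℕ)
  have h2 := lt_off_blk_add nvf ht hsum u.isLt
  have hJ : (u : ℕ) - off nvf (blk nvf t (u : ℕ)) < nvf (blk nvf t (u : ℕ)) := by omega
  obtain ⟨v, hv, hc, -⟩ := exists_vstar hm hmn hJ
  exact ⟨⟨v, hv⟩, mem_Rset.2 hc⟩

omit ht hpos hsum in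
lemma Rset_interval {u v1 v2 g : Fin n} (h1 : v1 ∈ Rset nvf t n u) (h2 : v2 ∈ Rset nvf t n u)
    (hg1 : v1 ≤ g) (hg2 : g ≤ v2) : g ∈ Rset nvf t n u :=
  mem_Rset.2 (cond_interval (mem_Rset.1 h1) (mem_Rset.1 h2) hg1 hg2)

lemma hall_interval (S : Finset (Fin n)) (hS : S.Nonempty) (a b : ℕ) (hab : a ≤ b)
    (H : ∀ u ∈ S, ∀ v ∈ Rset nvf t n u, a ≤ (v : ℕ) ∧ (v : ℕ) ≤ b) :
    S.card ≤ b + 1 - a := by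
  classical
  have hn : 0 < n := by
    obtain ⟨u, -⟩ := hS
    exact u.pos
  have hcard : S.card = ∑ i ∈ Finset.range t,
      (S.filter (fun u : Fin n => blk nvf t (u : ℕ) = i)).card :=
    Finset.card_eq_sum_card_fiberwise (fun u _ => Finset.mem_range.2 (blk_lt nvf ht _))
  have key : ∀ i ∈ Finset.range t,
      (S.filter (fun u : Fin n => blk nvf t (u : ℕ) = i)).card * n < (b + 2 - a) * nvf i := by
    intro i hi
    rw [Finset.mem_range] at hi
    have hm : 0 < nvf i := hpos i hi
    have hmn : nvf i ≤ n := nvf_le_n hsum hi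
    set F := S.filter (fun u : Fin n => blk nvf t (u : ℕ) = i) with hF
    rcases F.eq_empty_or_nonempty with hFe | hFne
    · rw [hFe]
      simp only [Finset.card_empty, Nat.zero_mul]
      exact Nat.mul_pos (by omega) hm
    · set KS := F.image (fun u : Fin n => (u : ℕ) - off nvf i) with hKS
      have hKSne : KS.Nonempty := hFne.image _
      set J1 := KS.min' hKSne with hJ1d
      set J2 := KS.max' hKSne with hJ2d
      have hmemK : ∀ j ∈ KS, j < nvf i ∧
          ∀ v : Fin n, cond (nvf i) n j (v : ℕ) → a ≤ (v : ℕ) ∧ (v : ℕ) ≤ b := by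
        intro j hj
        obtain ⟨u, hu, rfl⟩ := Finset.mem_image.1 hj
        simp only [hF, Finset.mem_filter] at hu
        obtain ⟨huS, hui⟩ := hu
        have h1 : off nvf i ≤ (u : ℕ) := by
          have := off_blk_le nvf t (u : ℕ); rwa [hui] at this
        have h2 : (u : ℕ) < off nvf i + nvf i := by
          have := lt_off_blk_add nvf ht hsum u.isLt; rwa [hui] at this
        refine ⟨by omega, fun v hc => ?_⟩
        refine H u huS v (mem_Rset.2 ?_)
        rwa [hui]
      have hJ1 := hmemK J1 (KS.min'_mem hKSne)
      have hJ2 := hmemK J2 (KS.max'_mem hKSne)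
      have hJle : J1 ≤ J2 := KS.min'_le J2 (KS.max'_mem hKSne)
      have hcnt : (J2 + 1 - J1) * n < (b + 2 - a) * nvf i := by
        refine block_count hm hmn hJ2.1 hJle (fun v hv hc => ?_)
        rcases hc with hc | hc
        · exact hJ1.2 ⟨v, hv⟩ hc
        · exact hJ2.2 ⟨v, hv⟩ hc
      have hinj : Set.InjOn (fun u : Fin n => (u : ℕ) - off nvf i) F := by
        intro u hu u' hu' he
        simp only [hF, Finset.coe_filter, Set.mem_setOf_eq] at hu hu'
        have l1 : off nvf i ≤ (u : ℕ) := by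
          have := off_blk_le nvf t (u : ℕ); rwa [hu.2] at this
        have l2 : off nvf i ≤ (u' : ℕ) := by
          have := off_blk_le nvf t (u' : ℕ); rwa [hu'.2] at this
        simp only at he
        exact Fin.ext (by omega)
      have hcard2 : F.card = KS.card := (Finset.card_image_of_injOn hinj).symm
      have hsubI : KS ⊆ Finset.Icc J1 J2 := fun j hj =>
        Finset.mem_Icc.2 ⟨KS.min'_le j hj, KS.le_max' j hj⟩
      have hcard3 : KS.card ≤ J2 + 1 - J1 := by
        have := Finset.card_le_card hsubI
        rwa [Nat.card_Icc] at this
      calc F.card * n ≤ (J2 + 1 - J1) * n := Nat.mul_le_mul_right n (by omega)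
        _ < (b + 2 - a) * nvf i := hcnt
  have h1 : S.card * n < (b + 2 - a) * n := by
    calc S.card * n
        = ∑ i ∈ Finset.range t,
            (S.filter (fun u : Fin n => blk nvf t (u : ℕ) = i)).card * n := by
          rw [hcard, Finset.sum_mul]
      _ < ∑ i ∈ Finset.range t, (b + 2 - a) * nvf i :=
          Finset.sum_lt_sum_of_nonempty ⟨0, Finset.mem_range.2 ht⟩ key
      _ = (b + 2 - a) * ∑ i ∈ Finset.range t, nvf i := by rw [Finset.mul_sum]
      _ = (b + 2 - a) * n := by rw [show ∑ i ∈ Finset.range t, nvf i = n from hsum]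
  have h2 : S.card < b + 2 - a := Nat.lt_of_mul_lt_mul_right h1
  omega

lemma hall_cond (S : Finset (Fin n)) : S.card ≤ (S.biUnion (Rset nvf t n)).card := by
  classical
  induction S using Finset.strongInduction with
  | _ S ih =>
    rcases S.eq_empty_or_nonempty with rfl | hS
    · simp
    have hUne : (S.biUnion (Rset nvf t n)).Nonempty := by
      obtain ⟨u, hu⟩ := hS
      obtain ⟨v, hv⟩ := Rset_nonempty ht hpos hsum u
      exact ⟨v, Finset.mem_biUnion.2 ⟨u, hu, hv⟩⟩
    set U := S.biUnion (Rset nvf t n) with hU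
    set A := U.min' hUne with hA
    set B := U.max' hUne with hB
    by_cases hgap : ∀ g : Fin n, A ≤ g → g ≤ B → g ∈ U
    · have hsub : Finset.Icc A B ⊆ U := by
        intro g hg
        rw [Finset.mem_Icc] at hg
        exact hgap g hg.1 hg.2
      have hAB : (A : ℕ) ≤ (B : ℕ) := U.min'_le B (U.max'_mem hUne)
      have hc1 : (B : ℕ) + 1 - (A : ℕ) ≤ U.card := by
        have := Finset.card_le_card hsub
        rwa [Fin.card_Icc] at this
      have hint : S.card ≤ (B : ℕ) + 1 - (A : ℕ) := by
        refine hall_interval ht hpos hsum S hS A B hAB (fun u hu v hv => ?_)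
        have hvU : v ∈ U := Finset.mem_biUnion.2 ⟨u, hu, hv⟩
        exact ⟨U.min'_le v hvU, U.le_max' v hvU⟩
      omega
    · push_neg at hgap
      obtain ⟨g, hAg, hgB, hgU⟩ := hgap
      have split : ∀ u ∈ S, (∀ v ∈ Rset nvf t n u, v < g) ∨ (∀ v ∈ Rset nvf t n u, g < v) := by
        intro u hu
        by_cases h1 : ∀ v ∈ Rset nvf t n u, v < g
        · exact Or.inl h1
        · push_neg at h1
          obtain ⟨v2, hv2, hgv2⟩ := h1
          refine Or.inr fun v hv => ?_
          by_contra hvg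
          push_neg at hvg
          exact hgU (Finset.mem_biUnion.2 ⟨u, hu, Rset_interval hv hv2 hvg hgv2⟩)
      set S1 := S.filter (fun u => ∀ v ∈ Rset nvf t n u, v < g) with hS1
      set S2 := S.filter (fun u => ∀ v ∈ Rset nvf t n u, g < v) with hS2
      have hcover : S ⊆ S1 ∪ S2 := by
        intro u hu
        rcases split u hu with h | h
        · exact Finset.mem_union_left _ (Finset.mem_filter.2 ⟨hu, h⟩)
        · exact Finset.mem_union_right _ (Finset.mem_filter.2 ⟨hu, h⟩)
      obtain ⟨uA, huA, hvA⟩ := Finset.mem_biUnion.1 (U.min'_mem hUne)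
      obtain ⟨uB, huB, hvB⟩ := Finset.mem_biUnion.1 (U.max'_mem hUne)
      have hAgne : A ≠ g := fun h => hgU (h ▸ U.min'_mem hUne)
      have hBgne : g ≠ B := fun h => hgU (h ▸ U.max'_mem hUne)
      have hAglt : A < g := lt_of_le_of_ne hAg hAgne
      have hgBlt : g < B := lt_of_le_of_ne hgB hBgne
      have huA1 : uA ∈ S1 := by
        rcases split uA huA with h | h
        · exact Finset.mem_filter.2 ⟨huA, h⟩
        · exact absurd (h A hvA) (by exact fun hh => absurd hAglt (not_lt.2 hh.le))
      have huB2 : uB ∈ S2 := by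
        rcases split uB huB with h | h
        · exact absurd (h B hvB) (by exact fun hh => absurd hgBlt (not_lt.2 hh.le))
        · exact Finset.mem_filter.2 ⟨huB, h⟩
      have huA2 : uA ∉ S2 := by
        rw [hS2, Finset.mem_filter]
        rintro ⟨-, hall⟩
        exact absurd (hall A hvA) (not_lt.2 hAglt.le)
      have huB1 : uB ∉ S1 := by
        rw [hS1, Finset.mem_filter]
        rintro ⟨-, hall⟩
        exact absurd (hall B hvB) (not_lt.2 hgBlt.le)
      have hss1 : S1 ⊂ S := (Finset.ssubset_iff_of_subset (Finset.filter_subset _ _)).2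
        ⟨uB, huB, huB1⟩
      have hss2 : S2 ⊂ S := (Finset.ssubset_iff_of_subset (Finset.filter_subset _ _)).2
        ⟨uA, huA, huA2⟩
      have h1 := ih S1 hss1
      have h2 := ih S2 hss2
      have hdisj : Disjoint (S1.biUnion (Rset nvf t n)) (S2.biUnion (Rset nvf t n)) := by
        rw [Finset.disjoint_left]
        intro v hv1 hv2
        obtain ⟨u1, hu1, hvu1⟩ := Finset.mem_biUnion.1 hv1
        obtain ⟨u2, hu2, hvu2⟩ := Finset.mem_biUnion.1 hv2
        have p1 := (Finset.mem_filter.1 hu1).2 v hvu1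
        have p2 := (Finset.mem_filter.1 hu2).2 v hvu2
        exact absurd (p1.trans p2) (lt_irrefl v)
      have hsubU : S1.biUnion (Rset nvf t n) ∪ S2.biUnion (Rset nvf t n) ⊆ U := by
        apply Finset.union_subset
        · exact Finset.biUnion_subset_biUnion_of_subset_left _ (Finset.filter_subset _ _)
        · exact Finset.biUnion_subset_biUnion_of_subset_left _ (Finset.filter_subset _ _)
      calc S.card ≤ (S1 ∪ S2).card := Finset.card_le_card hcover
        _ ≤ S1.card + S2.card := Finset.card_union_le _ _
        _ ≤ (S1.biUnion (Rset nvf t n)).card + (S2.biUnion (Rset nvf t n)).card :=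
            Nat.add_le_add h1 h2
        _ = (S1.biUnion (Rset nvf t n) ∪ S2.biUnion (Rset nvf t n)).card :=
            (Finset.card_union_of_disjoint hdisj).symm
        _ ≤ U.card := Finset.card_le_card hsubU

end Main

lemma rat_iff {m n k w : ℕ} (hm : 0 < m) (hn : 0 < n) (hk : 1 ≤ k) :
    (((k : ℚ) - 1) / (m : ℚ) < (2 * (w : ℚ) + 1) / (2 * (n : ℚ)) ∧
      (2 * (w : ℚ) + 1) / (2 * (n : ℚ)) ≤ (k : ℚ) / (m : ℚ)) ↔ cond m n (k - 1) w := by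
  have hmq : (0 : ℚ) < m := by exact_mod_cast hm
  have hnq0 : (0 : ℚ) < n := by exact_mod_cast hn
  have hnq : (0 : ℚ) < 2 * n := by linarith
  rw [div_lt_div_iff₀ hmq hnq, div_le_div_iff₀ hnq hmq]
  unfold cond
  have hkk : k - 1 + 1 = k := by omega
  rw [hkk]
  constructor
  · rintro ⟨h1, h2⟩
    constructor
    · have h1' : ((k : ℚ) - 1) * (2 * n) < (2 * w + 1) * m := h1
      qify [hk]
      nlinarith [h1']
    · have h2' : (2 * (w : ℚ) + 1) * m ≤ k * (2 * n) := h2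
      qify
      nlinarith [h2']
  · rintro ⟨h1, h2⟩
    constructor
    · have h1' : 2 * ((k : ℚ) - 1) * n < (2 * w + 1) * m := by qify [hk] at h1; exact_mod_cast h1
      nlinarith [h1']
    · have h2' : (2 * (w : ℚ) + 1) * m ≤ 2 * k * n := by qify at h2; exact_mod_cast h2
      nlinarith [h2']

lemma cond_nn {n J w : ℕ} (hn : 0 < n) : cond n n J w ↔ w = J := by
  unfold cond
  constructor
  · rintro ⟨h1, h2⟩
    have l1 : 2 * J < 2 * w + 1 := Nat.lt_of_mul_lt_mul_right h1
    have l2 : 2 * w + 1 ≤ 2 * (J + 1) := Nat.le_of_mul_le_mul_right h2 hn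
    omega
  · rintro rfl
    constructor
    · exact (Nat.mul_lt_mul_right hn).2 (by omega)
    · exact Nat.mul_le_mul_right n (by omega)

lemma sum_filter_eq_off {t : ℕ} (nv : Fin t → ℕ) (i : Fin t) :
    (∑ m ∈ Finset.univ.filter (fun m => m < i), nv m) =
      off (fun j => if h : j < t then nv ⟨j, h⟩ else 0) (i : ℕ) := by
  classical
  set nvf : ℕ → ℕ := fun j => if h : j < t then nv ⟨j, h⟩ else 0 with hnvf
  have e1 : (∑ m ∈ Finset.univ.filter (fun m => m < i), nv m) =
      ∑ m : Fin t, if (m : ℕ) < (i : ℕ) then nvf (m : ℕ) else 0 := by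
    rw [Finset.sum_filter]
    refine Finset.sum_congr rfl fun m _ => ?_
    simp only [hnvf, Fin.lt_def, m.isLt, dif_pos, Fin.eta]
  have e2 : (∑ m : Fin t, if (m : ℕ) < (i : ℕ) then nvf (m : ℕ) else 0) =
      ∑ j ∈ Finset.range t, if j < (i : ℕ) then nvf j else 0 :=
    Fin.sum_univ_eq_sum_range (fun j => if j < (i : ℕ) then nvf j else 0) t
  have e3 : (∑ j ∈ Finset.range t, if j < (i : ℕ) then nvf j else 0) =
      ∑ j ∈ Finset.range (i : ℕ), nvf j := by
    rw [← Finset.sum_filter]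
    congr 1
    have hit : (i : ℕ) ≤ t := le_of_lt i.isLt
    ext j
    simp only [Finset.mem_filter, Finset.mem_range]
    omega
  rw [e1, e2, e3]
  rfl

end Stmt10

open Stmt10

/-- Theorem 1 as an existence result for one column: there is a permutation `π` of
`{1,…,n}` (here `Fin n`, 0-indexed) such that, with `H u = (2π(u)-1)/(2n)` (1-indexed
values), every block of consecutive `n_i` entries is a Latin hypercube design with
`n_i` runs, and the whole column is a Latin hypercube design with `n` runs. -/
theorem stmt_10 (t : ℕ) (ht : 1 ≤ t) (nv : Fin t → ℕ) (hnv : ∀ j, 0 < nv j)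
    (n : ℕ) (hn : n = ∑ j, nv j) :
    ∃ π : Equiv.Perm (Fin n),
      ∀ H : Fin n → ℚ,
        (H = fun u => (2 * (((π u : ℕ) + 1 : ℕ) : ℚ) - 1) / (2 * (n : ℚ))) →
        ((∀ i : Fin t, ∀ k ∈ Finset.Icc 1 (nv i),
          (Finset.univ.filter (fun (u : Fin n) =>
            (∑ m ∈ Finset.univ.filter (fun m => m < i), nv m) ≤ (u : ℕ) ∧
            (u : ℕ) < (∑ m ∈ Finset.univ.filter (fun m => m < i), nv m) + nv i ∧
            ((k : ℚ) - 1) / (nv i : ℚ) < H u ∧ H u ≤ (k : ℚ) / (nv i : ℚ))).card = 1) ∧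
        (∀ v ∈ Finset.Icc 1 n,
          (Finset.univ.filter (fun (u : Fin n) =>
            ((v : ℚ) - 1) / (n : ℚ) < H u ∧ H u ≤ (v : ℚ) / (n : ℚ))).card = 1)) := by
  classical
  set nvf : ℕ → ℕ := fun j => if h : j < t then nv ⟨j, h⟩ else 0 with hnvf
  have hpos : ∀ j < t, 0 < nvf j := by
    intro j hj
    simp only [hnvf, hj, dif_pos]
    exact hnv _
  have hsum : off nvf t = n := by
    rw [hn]
    unfold off
    rw [← Fin.sum_univ_eq_sum_range (fun j => nvf j) t]
    refine Finset.sum_congr rfl fun m _ => ?_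
    simp only [hnvf, m.isLt, dif_pos, Fin.eta]
  have hn0 : 0 < n := by
    rw [← hsum]
    unfold off
    calc 0 < nvf 0 := hpos 0 ht
      _ ≤ ∑ j ∈ Finset.range t, nvf j :=
        Finset.single_le_sum (fun j _ => Nat.zero_le _) (Finset.mem_range.2 ht)
  obtain ⟨f, hfinj, hf⟩ :=
    (Finset.all_card_le_biUnion_card_iff_exists_injective (Rset nvf t n)).1
      (fun S => hall_cond ht hpos hsum S)
  have hbij : Function.Bijective f := Finite.injective_iff_bijective.1 hfinj
  refine ⟨Equiv.ofBijective f hbij, ?_⟩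
  intro H hH
  subst hH
  have hπ : ∀ u : Fin n, ((Equiv.ofBijective f hbij) u : ℕ) = (f u : ℕ) := fun u => rfl
  have hHval : ∀ u : Fin n,
      (2 * ((((Equiv.ofBijective f hbij) u : ℕ) + 1 : ℕ) : ℚ) - 1) =
        2 * ((f u : ℕ) : ℚ) + 1 := by
    intro u
    rw [hπ]
    push_cast
    ring
  constructor
  · -- block property
    intro i k hk
    rw [Finset.mem_Icc] at hk
    obtain ⟨hk1, hk2⟩ := hk
    have hoff := sum_filter_eq_off nv i
    rw [← hnvf] at hoff
    have hnvi : nvf (i : ℕ) = nv i := by simp only [hnvf, i.isLt, dif_pos, Fin.eta]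
    have hbound : off nvf (i : ℕ) + nv i ≤ n := by
      have h1 : off nvf ((i : ℕ) + 1) ≤ off nvf t := off_mono nvf i.isLt
      rw [off_succ, hnvi] at h1
      omega
    have hu0lt : off nvf (i : ℕ) + (k - 1) < n := by omega
    rw [Finset.card_eq_one]
    refine ⟨⟨off nvf (i : ℕ) + (k - 1), hu0lt⟩, ?_⟩
    ext u
    simp only [Finset.mem_filter, Finset.mem_univ, true_and, Finset.mem_singleton, hoff]
    rw [hHval u]
    constructor
    · rintro ⟨h1, h2, h3, h4⟩
      have hblk : blk nvf t (u : ℕ) = (i : ℕ) :=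
        blk_unique nvf ht hsum u.isLt i.isLt h1 (by rw [hnvi]; exact h2)
      have hc : cond (nv i) n (k - 1) ((f u : ℕ)) :=
        (rat_iff (hnv i) hn0 hk1).1 ⟨h3, h4⟩
      have hfmem := hf u
      rw [mem_Rset, hblk, hnvi] at hfmem
      have heq := cond_disjoint hn0 hfmem hc
      exact Fin.ext (show (u : ℕ) = off nvf (i : ℕ) + (k - 1) by omega)
    · rintro rfl
      have hle : off nvf (i : ℕ) ≤ off nvf (i : ℕ) + (k - 1) := Nat.le_add_right _ _
      have hlt : off nvf (i : ℕ) + (k - 1) < off nvf (i : ℕ) + nv i := by omega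
      have hblk : blk nvf t (off nvf (i : ℕ) + (k - 1)) = (i : ℕ) :=
        blk_unique nvf ht hsum hu0lt i.isLt hle (by rw [hnvi]; exact hlt)
      have hfmem := hf ⟨off nvf (i : ℕ) + (k - 1), hu0lt⟩
      rw [mem_Rset] at hfmem
      simp only at hfmem
      rw [hblk, hnvi] at hfmem
      have hsub : off nvf (i : ℕ) + (k - 1) - off nvf (i : ℕ) = k - 1 := by omega
      rw [hsub] at hfmem
      have := (rat_iff (hnv i) hn0 hk1).2 hfmem
      exact ⟨hle, hlt, this.1, this.2⟩
  · -- whole column property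
    intro v hv
    rw [Finset.mem_Icc] at hv
    obtain ⟨hv1, hv2⟩ := hv
    rw [Finset.card_eq_one]
    refine ⟨(Equiv.ofBijective f hbij).symm ⟨v - 1, by omega⟩, ?_⟩
    ext u
    simp only [Finset.mem_filter, Finset.mem_univ, true_and, Finset.mem_singleton]
    rw [hHval u]
    constructor
    · rintro ⟨h3, h4⟩
      have hc : cond n n (v - 1) ((f u : ℕ)) :=
        (rat_iff hn0 hn0 hv1).1 ⟨h3, h4⟩
      have heq : (f u : ℕ) = v - 1 := (cond_nn hn0).1 hc
      have : (Equiv.ofBijective f hbij) u = ⟨v - 1, by omega⟩ := Fin.ext heq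
      rw [← this, Equiv.symm_apply_apply]
    · rintro rfl
      have happ : (Equiv.ofBijective f hbij)
          ((Equiv.ofBijective f hbij).symm ⟨v - 1, by omega⟩) = ⟨v - 1, by omega⟩ :=
        Equiv.apply_symm_apply _ _
      have heq : (f ((Equiv.ofBijective f hbij).symm ⟨v - 1, by omega⟩) : ℕ) = v - 1 := by
        have h5 := congrArg Fin.val happ
        exact h5
      have hc : cond n n (v - 1) (f ((Equiv.ofBijective f hbij).symm ⟨v - 1, by omega⟩) : ℕ) :=
        (cond_nn hn0).2 heq
      have := (rat_iff hn0 hn0 hv1).2 hc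
      exact ⟨this.1, this.2⟩
end

section
/- Let H = {0.1, 0.2, 0.3, 0.5, 0.7, 0.8, 0.9} ⊂ (0,1]. Then: (a) for every k ∈ {1, …, 7}, exactly one element of H lies in the bin ((k−1)/7, k/7]; and (b) there is no partition of H into sets G_1, G_2, G_3 with |G_1| = 1, |G_2| = |G_3| = 3 such that G_1 has exactly one element in (0,1] and, for each j ∈ {2,3} and each k ∈ {1,2,3}, G_j has exactly one element in the bin ((k−1)/3, k/3]. -/
theorem Finset.not_disjoint_of_card_filter_eq_one {α : Type*} [DecidableEq α] {H G G' : Finset α}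
    {p : α → Prop} [DecidablePred p] (hG : G ⊆ H) (hG' : G' ⊆ H)
    (hH : (H.filter p).card ≤ 1) (h : (G.filter p).card = 1) (h' : (G'.filter p).card = 1) :
    ¬ Disjoint G G' := by
  intro hdisj
  have hsub : G.filter p ∪ G'.filter p ⊆ H.filter p :=
    Finset.union_subset (Finset.filter_subset_filter p hG) (Finset.filter_subset_filter p hG')
  have hcard := Finset.card_le_card hsub
  rw [Finset.card_union_of_disjoint (Finset.disjoint_filter_filter hdisj), h, h'] at hcard
  omega

/-- Counterexample from the remark after Theorem 1: the 7-point Latin hypercube design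
`H = {0.1, 0.2, 0.3, 0.5, 0.7, 0.8, 0.9}` has exactly one point in each bin
`((k-1)/7, k/7]`, but it admits no partition into slices `G₁, G₂, G₃` of sizes
`1, 3, 3` each of which is a Latin hypercube design. -/
theorem stmt_11 :
    ∀ H : Finset ℚ,
      H = {1/10, 2/10, 3/10, 5/10, 7/10, 8/10, 9/10} →
      ((∀ k ∈ Finset.Icc (1 : ℕ) 7,
        (H.filter (fun x => ((k : ℚ) - 1) / 7 < x ∧ x ≤ (k : ℚ) / 7)).card = 1) ∧
      ¬ ∃ G₁ G₂ G₃ : Finset ℚ,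
          Disjoint G₁ G₂ ∧ Disjoint G₁ G₃ ∧ Disjoint G₂ G₃ ∧
          G₁ ∪ G₂ ∪ G₃ = H ∧
          G₁.card = 1 ∧ G₂.card = 3 ∧ G₃.card = 3 ∧
          (G₁.filter (fun x => 0 < x ∧ x ≤ 1)).card = 1 ∧
          (∀ k ∈ Finset.Icc (1 : ℕ) 3,
            (G₂.filter (fun x => ((k : ℚ) - 1) / 3 < x ∧ x ≤ (k : ℚ) / 3)).card = 1) ∧
          (∀ k ∈ Finset.Icc (1 : ℕ) 3,
            (G₃.filter (fun x => ((k : ℚ) - 1) / 3 < x ∧ x ≤ (k : ℚ) / 3)).card = 1)) := by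
  rintro H rfl
  refine ⟨fun k hk => ?_, ?_⟩
  · fin_cases hk <;> norm_num [Finset.filter_insert, Finset.filter_singleton]
  · rintro ⟨G₁, G₂, G₃, -, -, h23, hunion, -, -, -, -, hG₂, hG₃⟩
    -- `1/2` is the only point of `H` in the middle bin `(1/3, 2/3]`, which both slices must hit
    have hmiddle : ({1/10, 2/10, 3/10, 5/10, 7/10, 8/10, 9/10} : Finset ℚ).filter
        (fun x => ((2 : ℕ) - 1 : ℚ) / 3 < x ∧ x ≤ ((2 : ℕ) : ℚ) / 3) = {5/10} := by
      norm_num [Finset.filter_insert, Finset.filter_singleton]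
    refine Finset.not_disjoint_of_card_filter_eq_one ?_ ?_ (by rw [hmiddle]; rfl)
      (hG₂ 2 (by decide)) (hG₃ 2 (by decide)) h23
    · rw [← hunion]; exact Finset.subset_union_right.trans Finset.subset_union_left
    · rw [← hunion]; exact Finset.subset_union_right
end
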